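/- arXiv:1304.2619 — 2 statements merged into one kernel-verified Lean document; each statement's English description precedes it below -/
import Mathlib

section
/- Let s > 1/2 and a, b, c ∈ H^s_+(𝕋). Then, as operators on L²_+(𝕋), H_{Π(a b̄ c)} = T_{a b̄} H_c + H_a T_{b c̄} − H_a H_b H_c. -/
open scoped BigOperators ComplexConjugate

noncomputable section

/-- The Hardy space `L²₊(𝕋)` of the circle, modeled by the Hilbert space `ℓ²(ℕ, ℂ)` of
sequences of nonnegative Fourier (= Taylor) coefficients. -/
abbrev Hardy : Type := lp (fun _ : ℕ => ℂ) 2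

/-- The Fourier coefficients of an element of the Hardy space. -/
def coeffs (f : Hardy) : ℕ → ℂ := fun n => f n

/-- Membership in the Sobolev space `Hˢ₊(𝕋)`, expressed on Fourier coefficients. -/
def InHs (s : ℝ) (u : ℕ → ℂ) : Prop :=
  Summable fun k : ℕ => ((1 : ℝ) + (k : ℝ) ^ 2) ^ s * ‖u k‖ ^ 2

/-- The `Hˢ` norm, expressed on Fourier coefficients. -/
def hsNorm (s : ℝ) (u : ℕ → ℂ) : ℝ :=
  Real.sqrt (∑' k : ℕ, ((1 : ℝ) + (k : ℝ) ^ 2) ^ s * ‖u k‖ ^ 2)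

/-- Membership in the Wiener algebra `W`. -/
def InW (u : ℕ → ℂ) : Prop := Summable fun k : ℕ => ‖u k‖

/-- The Wiener norm `‖u‖_W = Σ |û(k)|`. -/
def wienerNorm (u : ℕ → ℂ) : ℝ := ∑' k : ℕ, ‖u k‖

/-- The `L²` norm, expressed on Fourier coefficients. -/
def l2Norm (u : ℕ → ℂ) : ℝ := Real.sqrt (∑' k : ℕ, ‖u k‖ ^ 2)

/-- The Hankel operator `H_u(h) = Π(u h̄)`, expressed on Fourier coefficients:
`(H_u h)^(n) = Σ_p û(n+p) conj(ĥ(p))`. -/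
def hankel (u h : ℕ → ℂ) : ℕ → ℂ := fun n => ∑' p : ℕ, u (n + p) * conj (h p)

/-- The shifted Hankel operator `K_u = S* H_u`. -/
def shiftedHankel (u h : ℕ → ℂ) : ℕ → ℂ := fun n => hankel u h (n + 1)

/-- Fourier coefficients of the pointwise product `fg` of two holomorphic (Hardy class)
functions: the Cauchy product. -/
def mulCoeff (f g : ℕ → ℂ) : ℕ → ℂ := fun n => ∑ p ∈ Finset.range (n + 1), f p * g (n - p)

/-- Fourier coefficients of `T_{a b̄}(h) = Π(a b̄ h)` for `a, b, h` in the Hardy class. -/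
def toeplitzAB (a b h : ℕ → ℂ) : ℕ → ℂ :=
  fun n => ∑' q : ℕ, conj (b q) * mulCoeff a h (n + q)

/-- Fourier coefficients of `T_{ā}(h) = Π(ā h)` for `a, h` in the Hardy class. -/
def toeplitzConj (a h : ℕ → ℂ) : ℕ → ℂ := fun n => ∑' q : ℕ, conj (a q) * h (n + q)

/-- The Szegő nonlinearity `Π(|u|²u) = T_{u ū}(u)`. -/
def szegoNL (u : ℕ → ℂ) : ℕ → ℂ := toeplitzAB u u u

/-- The operator `B_u = (i/2) H_u² - i T_{|u|²}` of the Lax pair. -/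
def laxB (u h : ℕ → ℂ) : ℕ → ℂ := fun n =>
  Complex.I / 2 * hankel u (hankel u h) n - Complex.I * toeplitzAB u u h n

/-- The operator `C_u = (i/2) K_u² - i T_{|u|²}` of the Lax pair. -/
def laxC (u h : ℕ → ℂ) : ℕ → ℂ := fun n =>
  Complex.I / 2 * shiftedHankel u (shiftedHankel u h) n - Complex.I * toeplitzAB u u h n

/-- `u : ℝ → L²₊` is a (smooth in time, `Hˢ`-valued) solution of the cubic Szegő equation
`i ∂_t u = Π(|u|²u)`. -/
def IsSzegoSolution (s : ℝ) (u : ℝ → Hardy) : Prop :=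
  (∀ t, InHs s (coeffs (u t))) ∧ ContDiff ℝ (⊤ : ℕ∞) u ∧
    ∀ t n, HasDerivAt (fun τ : ℝ => coeffs (u τ) n) (-Complex.I * szegoNL (coeffs (u t)) n) t

/-- The Hankel operator with symbol `u` (composed with complex conjugation, which does not
change its range), as a linear map on finitely supported sequences. -/
def hankelLM (u : ℕ → ℂ) : (ℕ →₀ ℂ) →ₗ[ℂ] (ℕ → ℂ) :=
  Finsupp.lsum ℂ fun p => LinearMap.toSpanSingleton ℂ (ℕ → ℂ) fun n => u (n + p)

/-- The rank of the Hankel operator `H_u`. -/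
def hankelRank (u : ℕ → ℂ) : ℕ := Module.finrank ℂ (LinearMap.range (hankelLM u))

/-- The finite rank manifold `𝒱(d)`: `u` with `rk H_u = [(d+1)/2]` and `rk K_u = [d/2]`
(recall `K_u = H_{S*u}`). -/
def InV (d : ℕ) (u : ℕ → ℂ) : Prop :=
  InHs (1 / 2) u ∧ FiniteDimensional ℂ (LinearMap.range (hankelLM u)) ∧
    hankelRank u = (d + 1) / 2 ∧ hankelRank (fun n => u (n + 1)) = d / 2

/-- `w = w^y = (I + y H_u²)⁻¹(1)`, characterized by `(I + y H_u²) w = 1`. -/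
def IsResolventOne (y : ℝ) (u w : ℕ → ℂ) : Prop :=
  Memℓp w 2 ∧ ∀ n, w n + (y : ℂ) * hankel u (hankel u w) n = if n = 0 then 1 else 0

/-- The Hamiltonian vector field `X_{J^y}(u) = 2iy w^y H_u(w^y)` (a pointwise product of two
Hardy class functions), expressed on Fourier coefficients; `w` stands for `w^y`. -/
def XJ (y : ℝ) (u w : ℕ → ℂ) : ℕ → ℂ :=
  fun n => 2 * Complex.I * (y : ℂ) * mulCoeff w (hankel u w) n

/-- The operator `G_u^y(h) = -y w^y Π(conj(w^y) h) + y² (H_u w^y) Π(conj(H_u w^y) h)`;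
`w` stands for `w^y`. -/
def Gop (y : ℝ) (u w h : ℕ → ℂ) : ℕ → ℂ := fun n =>
  -(y : ℂ) * mulCoeff w (toeplitzConj w h) n
    + (y : ℂ) ^ 2 * mulCoeff (hankel u w) (toeplitzConj (hankel u w) h) n

/-- The operator `F_u^y(h) = G_u^y(h) - y² (h | H_u w^y) H_u w^y`; `w` stands for `w^y`. -/
def Fop (y : ℝ) (u w h : ℕ → ℂ) : ℕ → ℂ := fun n =>
  Gop y u w h n - (y : ℂ) ^ 2 * (∑' p : ℕ, h p * conj (hankel u w p)) * hankel u w n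

/-!
Evaluated at the `n`-th coefficient, each of the four operators is an absolutely convergent sum
of `â(i) conj(b̂(m)) ĉ(k) conj(ĥ(p))` over the quadruples with `i + k = n + m + p`; only the
range differs: all quadruples for `H_{Π(a b̄ c)}`, those with `i ≤ n + m` (i.e. `p ≤ k`) for
`T_{a b̄} H_c`, those with `n ≤ i` for `H_a T_{b c̄}`, and both for `H_a H_b H_c`. As `i ≤ n + m`
or `n ≤ i` always holds, the identity is inclusion–exclusion. Absolute convergence holds because
`s > 1/2` puts `a, b, c` in `ℓ¹`, while `h ∈ ℓ²` is bounded.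
-/

open Function Set

theorem summable_one_add_sq_rpow_inv {s : ℝ} (hs : 1 / 2 < s) :
    Summable fun k : ℕ => (((1 : ℝ) + (k : ℝ) ^ 2) ^ s)⁻¹ := by
  have h2s : 1 < ((2 : ℕ) : ℝ) * s := by push_cast; linarith
  rw [← summable_nat_add_iff 1]
  refine ((summable_nat_add_iff 1).mpr (Real.summable_nat_rpow_inv.mpr h2s)).of_nonneg_of_le
    (fun k => by positivity) fun k => ?_
  gcongr
  rw [Real.rpow_natCast_mul (by positivity)]
  gcongr
  simp

theorem InHs.summable_norm {s : ℝ} {u : ℕ → ℂ} (hs : 1 / 2 < s) (hu : InHs s u) :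
    Summable fun k => ‖u k‖ := by
  -- `‖u k‖ ≤ (w⁻¹ + w ‖u k‖²) / 2` with `w = (1 + k²)ˢ`
  refine (((summable_one_add_sq_rpow_inv hs).add hu).div_const 2).of_nonneg_of_le
    (fun _ => norm_nonneg _) fun k => ?_
  set w := ((1 : ℝ) + (k : ℝ) ^ 2) ^ s
  have hw : 0 < w := by positivity
  rw [le_div_iff₀ two_pos, ← mul_le_mul_iff_right₀ hw]
  field_simp
  nlinarith [sq_nonneg (w * ‖u k‖ - 1)]

theorem hasSum_iff_hasSum_of_injOn {α β γ : Type*} [AddCommMonoid α] [TopologicalSpace α]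
    {f : β → α} {g : γ → α} {a : α} {S : Set γ} (φ : γ → β) (hgS : support g ⊆ S)
    (hφ : InjOn φ S) (hf : support f ⊆ φ '' S) (hfg : EqOn (f ∘ φ) g S) :
    HasSum g a ↔ HasSum f a := by
  refine (hasSum_iff_hasSum_of_ne_zero_bij (fun x : support g => φ x)
    (fun x y hxy => Subtype.ext (hφ (hgS x.2) (hgS y.2) hxy)) (fun y hy => ?_)
    (fun x => hfg (hgS x.2))).symm
  obtain ⟨x, hx, rfl⟩ := hf hy
  exact ⟨⟨x, fun h0 => hy (by simpa [h0] using hfg hx)⟩, rfl⟩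

theorem Summable.tsum_prod_prod {α β γ E : Type*} [NormedAddCommGroup E] [CompleteSpace E]
    {f : α × β × γ → E} (hf : Summable f) :
    ∑' x, f x = ∑' a, ∑' b, ∑' c, f (a, b, c) := by
  rw [hf.tsum_prod]
  exact tsum_congr fun a => (hf.prod_factor a).tsum_prod

theorem mulCoeff_eq_tsum (f g : ℕ → ℂ) (N : ℕ) :
    mulCoeff f g N = ∑' j, (if j ≤ N then f j else 0) * g (N - j) := by
  rw [tsum_eq_sum (s := Finset.range (N + 1)) fun j hj => by
    rw [if_neg (by simpa [Nat.lt_succ_iff] using hj), zero_mul]]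
  exact Finset.sum_congr rfl fun j hj => by
    rw [if_pos (Nat.lt_succ_iff.mp (Finset.mem_range.mp hj))]

/-- `(i, m, k)` indexes `â(i) conj(b̂(m)) ĉ(k)`; the index of `ĥ` is then forced to be
`i + k - (n + m)`. -/
def cubicSummand (a b c h : ℕ → ℂ) (n : ℕ) (x : ℕ × ℕ × ℕ) : ℂ :=
  if n + x.2.1 ≤ x.1 + x.2.2 then
    a x.1 * conj (b x.2.1) * c x.2.2 * conj (h (x.1 + x.2.2 - (n + x.2.1)))
  else 0

theorem cubicSummand_apply (a b c h : ℕ → ℂ) (n i m k : ℕ) :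
    cubicSummand a b c h n (i, m, k) =
      if n + m ≤ i + k then a i * conj (b m) * c k * conj (h (i + k - (n + m))) else 0 :=
  rfl

theorem summable_cubicSummand {a b c h : ℕ → ℂ} {C : ℝ} (ha : Summable fun k => ‖a k‖)
    (hb : Summable fun k => ‖b k‖) (hc : Summable fun k => ‖c k‖) (hC : ∀ p, ‖h p‖ ≤ C)
    (n : ℕ) : Summable (cubicSummand a b c h n) := by
  have hC0 : 0 ≤ C := (norm_nonneg _).trans (hC 0)
  have hbc : Summable fun y : ℕ × ℕ => ‖b y.1‖ * ‖c y.2‖ :=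
    hb.mul_of_nonneg hc (fun _ => norm_nonneg _) fun _ => norm_nonneg _
  refine Summable.of_norm_bounded ((ha.mul_of_nonneg hbc (fun _ => norm_nonneg _)
    fun _ => by positivity).mul_right C) fun ⟨i, m, k⟩ => ?_
  rw [cubicSummand_apply]
  split_ifs
  · simp only [norm_mul, Complex.norm_conj]
    calc _ ≤ ‖a i‖ * ‖b m‖ * ‖c k‖ * C := by gcongr; exact hC _
      _ = _ := by ring
  · simp only [norm_zero]
    positivity

section Representations

variable {a b c h : ℕ → ℂ} {n : ℕ}

/- In each lemma, `G` is the summand of the nested series in its own summation variables, and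
`φ` carries those variables to the indices `(i, m, k)` of `cubicSummand`. -/

theorem hankel_toeplitzAB_symbol_eq_tsum (hF : Summable (cubicSummand a b c h n)) :
    hankel (toeplitzAB a b c) h n = ∑' x, cubicSummand a b c h n x := by
  set G : ℕ × ℕ × ℕ → ℂ := fun x =>
    conj (b x.2.1) * ((if x.2.2 ≤ n + x.1 + x.2.1 then a x.2.2 else 0) *
      c (n + x.1 + x.2.1 - x.2.2)) * conj (h x.1)
  set S : Set (ℕ × ℕ × ℕ) := {x | x.2.2 ≤ n + x.1 + x.2.1}
  set φ : ℕ × ℕ × ℕ → ℕ × ℕ × ℕ := fun x => (x.2.2, x.2.1, n + x.1 + x.2.1 - x.2.2)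
  have hGS : support G ⊆ S := fun ⟨p, q, j⟩ hx =>
    not_not.mp fun hj : ¬j ≤ n + p + q => hx (by simp only [G, if_neg hj, zero_mul, mul_zero])
  have hφ : InjOn φ S := fun ⟨p, q, j⟩ hx ⟨p', q', j'⟩ hy h => by
    simp only [φ, Prod.mk.injEq, S, mem_ofPred_eq] at h hx hy
    simp only [Prod.mk.injEq]
    omega
  have hrange : support (cubicSummand a b c h n) ⊆ φ '' S := by
    rintro ⟨i, m, k⟩ hx
    simp only [mem_support, cubicSummand_apply, ne_eq, ite_eq_right_iff,
      Classical.not_imp] at hx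
    refine ⟨(i + k - (n + m), m, i), by simp only [S, mem_ofPred_eq]; omega, ?_⟩
    simp only [φ, Prod.mk.injEq, true_and]
    omega
  have hG : HasSum G _ := (hasSum_iff_hasSum_of_injOn φ hGS hφ hrange
    (fun ⟨p, q, j⟩ hx => ?_)).mpr hF.hasSum
  · rw [← hG.tsum_eq, hG.summable.tsum_prod_prod]
    refine tsum_congr fun p => ?_
    simp only [toeplitzAB, mulCoeff_eq_tsum, ← tsum_mul_left, ← tsum_mul_right]
    rfl
  · simp only [S, mem_ofPred_eq] at hx
    simp only [comp_apply, cubicSummand_apply, G, φ]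
    rw [if_pos (by omega), if_pos hx, show j + (n + p + q - j) - (n + q) = p by omega]
    ring

theorem toeplitzAB_hankel_eq_tsum (hF : Summable (cubicSummand a b c h n)) :
    toeplitzAB a b (hankel c h) n =
      ∑' x, ({x | x.1 ≤ n + x.2.1} : Set (ℕ × ℕ × ℕ)).indicator (cubicSummand a b c h n) x := by
  set G : ℕ × ℕ × ℕ → ℂ := fun x =>
    conj (b x.1) * ((if x.2.1 ≤ n + x.1 then a x.2.1 else 0) *
      (c (n + x.1 - x.2.1 + x.2.2) * conj (h x.2.2)))
  set φ : ℕ × ℕ × ℕ → ℕ × ℕ × ℕ := fun x => (x.2.1, x.1, n + x.1 - x.2.1 + x.2.2)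
  have hφ : InjOn φ univ := fun ⟨q, j, p⟩ _ ⟨q', j', p'⟩ _ h => by
    simp only [φ, Prod.mk.injEq] at h
    simp only [Prod.mk.injEq]
    omega
  have hrange : support (({x | x.1 ≤ n + x.2.1} : Set (ℕ × ℕ × ℕ)).indicator
        (cubicSummand a b c h n)) ⊆ φ '' univ := by
    rintro ⟨i, m, k⟩ hx
    simp only [mem_support, indicator, mem_ofPred_eq, cubicSummand_apply,
      ne_eq, ite_eq_right_iff, Classical.not_imp] at hx
    refine ⟨(m, i, k - (n + m - i)), mem_univ _, ?_⟩
    simp only [φ, Prod.mk.injEq, true_and]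
    omega
  have hG : HasSum G _ := (hasSum_iff_hasSum_of_injOn φ (subset_univ _) hφ hrange
    (fun ⟨q, j, p⟩ _ => ?_)).mpr (hF.indicator _).hasSum
  · rw [← hG.tsum_eq, hG.summable.tsum_prod_prod]
    refine tsum_congr fun q => ?_
    simp only [mulCoeff_eq_tsum, hankel, ← tsum_mul_left]
    rfl
  · simp only [comp_apply, indicator, mem_ofPred_eq, cubicSummand_apply, G, φ]
    by_cases hj : j ≤ n + q
    · simp only [if_pos hj]
      rw [if_pos (by omega), show j + (n + q - j + p) - (n + q) = p by omega]
      ring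
    · simp [hj]

theorem hankel_toeplitzAB_eq_tsum (hF : Summable (cubicSummand a b c h n)) :
    hankel a (toeplitzAB b c h) n =
      ∑' x, ({x | n ≤ x.1} : Set (ℕ × ℕ × ℕ)).indicator (cubicSummand a b c h n) x := by
  set G : ℕ × ℕ × ℕ → ℂ := fun x =>
    a (n + x.1) * (c x.2.1 * (conj (if x.2.2 ≤ x.1 + x.2.1 then b x.2.2 else 0) *
      conj (h (x.1 + x.2.1 - x.2.2))))
  set φ : ℕ × ℕ × ℕ → ℕ × ℕ × ℕ := fun x => (n + x.1, x.2.2, x.2.1)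
  have hφ : InjOn φ univ := fun ⟨p, k, j⟩ _ ⟨p', k', j'⟩ _ h => by
    simp only [φ, Prod.mk.injEq] at h
    simp only [Prod.mk.injEq]
    omega
  have hrange : support (({x | n ≤ x.1} : Set (ℕ × ℕ × ℕ)).indicator
        (cubicSummand a b c h n)) ⊆ φ '' univ := by
    rintro ⟨i, m, k⟩ hx
    simp only [mem_support, indicator, mem_ofPred_eq, cubicSummand_apply,
      ne_eq, ite_eq_right_iff, Classical.not_imp] at hx
    refine ⟨(i - n, k, m), mem_univ _, ?_⟩
    simp only [φ, Prod.mk.injEq, and_true]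
    omega
  have hG : HasSum G _ := (hasSum_iff_hasSum_of_injOn φ (subset_univ _) hφ hrange
    (fun ⟨p, k, j⟩ _ => ?_)).mpr (hF.indicator _).hasSum
  · rw [← hG.tsum_eq, hG.summable.tsum_prod_prod]
    refine tsum_congr fun p => ?_
    simp only [toeplitzAB, mulCoeff_eq_tsum, Complex.conj_tsum, map_mul,
      Complex.conj_conj, ← tsum_mul_left]
    rfl
  · simp only [comp_apply, indicator, mem_ofPred_eq, cubicSummand_apply, G, φ]
    by_cases hj : j ≤ p + k
    · have hjn : n + j ≤ n + p + k := by omega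
      simp only [if_pos (Nat.le_add_right n p), if_pos hjn, if_pos hj]
      rw [show n + p + k - (n + j) = p + k - j by omega]
      ring
    · have hjn : ¬n + j ≤ n + p + k := by omega
      simp [hj, hjn]

theorem hankel_hankel_hankel_eq_tsum (hF : Summable (cubicSummand a b c h n)) :
    hankel a (hankel b (hankel c h)) n =
      ∑' x, ({x | x.1 ≤ n + x.2.1} ∩ {x | n ≤ x.1} : Set (ℕ × ℕ × ℕ)).indicator
        (cubicSummand a b c h n) x := by
  set G : ℕ × ℕ × ℕ → ℂ := fun x =>
    a (n + x.1) * (conj (b (x.1 + x.2.1)) * (c (x.2.1 + x.2.2) * conj (h x.2.2)))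
  set φ : ℕ × ℕ × ℕ → ℕ × ℕ × ℕ := fun x => (n + x.1, x.1 + x.2.1, x.2.1 + x.2.2)
  have hφ : InjOn φ univ := fun ⟨p, q, r⟩ _ ⟨p', q', r'⟩ _ h => by
    simp only [φ, Prod.mk.injEq] at h
    simp only [Prod.mk.injEq]
    omega
  have hrange : support (({x | x.1 ≤ n + x.2.1} ∩ {x | n ≤ x.1} : Set (ℕ × ℕ × ℕ)).indicator
        (cubicSummand a b c h n)) ⊆ φ '' univ := by
    rintro ⟨i, m, k⟩ hx
    simp only [mem_support, indicator, mem_inter_iff, mem_ofPred_eq, cubicSummand_apply,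
      ne_eq, ite_eq_right_iff, Classical.not_imp] at hx
    refine ⟨(i - n, n + m - i, k - (n + m - i)), mem_univ _, ?_⟩
    simp only [φ, Prod.mk.injEq]
    omega
  have hG : HasSum G _ := (hasSum_iff_hasSum_of_injOn φ (subset_univ _) hφ hrange
    (fun ⟨p, q, r⟩ _ => ?_)).mpr (hF.indicator _).hasSum
  · rw [← hG.tsum_eq, hG.summable.tsum_prod_prod]
    refine tsum_congr fun p => ?_
    simp only [hankel, Complex.conj_tsum, map_mul, Complex.conj_conj, ← tsum_mul_left]
    rfl
  · simp only [comp_apply, indicator, mem_inter_iff, mem_ofPred_eq, cubicSummand_apply, G, φ]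
    rw [if_pos (by omega), if_pos (by omega), show n + p + (q + r) - (n + (p + q)) = r by omega]
    ring

end Representations

/-- **Lemma 2.1**: `H_{Π(a b̄ c)} = T_{a b̄} H_c + H_a T_{b c̄} - H_a H_b H_c`. -/
theorem statement3 (s : ℝ) (hs : 1 / 2 < s) (a b c : ℕ → ℂ)
    (ha : InHs s a) (hb : InHs s b) (hc : InHs s c)
    (h : ℕ → ℂ) (hh : Memℓp h 2) (n : ℕ) :
    hankel (toeplitzAB a b c) h n
      = toeplitzAB a b (hankel c h) n + hankel a (toeplitzAB b c h) n
        - hankel a (hankel b (hankel c h)) n := by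
  obtain ⟨C, hC⟩ := memℓp_infty_iff.mp (hh.of_exponent_ge le_top)
  have hF : Summable (cubicSummand a b c h n) := summable_cubicSummand (ha.summable_norm hs)
    (hb.summable_norm hs) (hc.summable_norm hs) (fun p => hC ⟨p, rfl⟩) n
  set S : Set (ℕ × ℕ × ℕ) := {x | x.1 ≤ n + x.2.1}
  set T : Set (ℕ × ℕ × ℕ) := {x | n ≤ x.1}
  have hST : S ∪ T = univ := eq_univ_of_forall fun x => by
    simp only [S, T, mem_union, mem_ofPred_eq]
    omega
  rw [hankel_toeplitzAB_symbol_eq_tsum hF, toeplitzAB_hankel_eq_tsum hF,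
    hankel_toeplitzAB_eq_tsum hF, hankel_hankel_hankel_eq_tsum hF,
    ← (hF.indicator S).tsum_add (hF.indicator T),
    ← ((hF.indicator S).add (hF.indicator T)).tsum_sub (hF.indicator (S ∩ T))]
  refine tsum_congr fun x => ?_
  rw [← indicator_union_add_inter_apply, hST, indicator_univ, add_sub_cancel_right]

end
end

section
/- For every u ∈ H^{1/2}_+(𝕋), the operators H_u² and K_u² are related by K_u² = H_u² − (·|u)u, i.e. K_u²(h) = H_u²(h) − (h|u)u for every h ∈ L²_+(𝕋). -/
open scoped BigOperators ComplexConjugate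

noncomputable section

/-!
`(K_u² h)ₙ = ∑_{p ≥ 1} ûₙ₊ₚ conj((H_u h)ₚ)` is the series defining `(H_u² h)ₙ` with its `p = 0`
term removed, and that term is `ûₙ conj((H_u h)₀) = (h|u) ûₙ`. The only analytic input is that the
series converges absolutely: for `u ∈ H^{1/2}₊` the operator `H_u` is Hilbert–Schmidt, so
`H_u h ∈ ℓ²` and Cauchy–Schwarz applies.
-/

theorem memℓp_two_iff_summable_norm_sq {α E : Type*} [NormedAddCommGroup E] {f : α → E} :
    Memℓp f 2 ↔ Summable fun i => ‖f i‖ ^ 2 := by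
  rw [memℓp_gen_iff (by norm_num)]
  norm_num

theorem lp.norm_sq_eq_tsum {α E : Type*} [NormedAddCommGroup E] (f : lp (fun _ : α => E) 2) :
    ‖f‖ ^ 2 = ∑' i, ‖f i‖ ^ 2 := by
  simpa using lp.norm_rpow_eq_tsum (p := 2) (by norm_num) f

theorem Memℓp.summable_mul_conj {α : Type*} {f g : α → ℂ} (hf : Memℓp f 2)
    (hg : Memℓp g 2) : Summable fun i => f i * conj (g i) := by
  simpa only [RCLike.inner_apply] using
    lp.summable_inner (𝕜 := ℂ) (⟨g, hg⟩ : lp (fun _ : α => ℂ) 2) ⟨f, hf⟩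

theorem Memℓp.norm_tsum_mul_conj_sq_le {α : Type*} {f g : α → ℂ} (hf : Memℓp f 2)
    (hg : Memℓp g 2) :
    ‖∑' i, f i * conj (g i)‖ ^ 2 ≤ (∑' i, ‖f i‖ ^ 2) * ∑' i, ‖g i‖ ^ 2 := by
  let F : lp (fun _ : α => ℂ) 2 := ⟨f, hf⟩
  let G : lp (fun _ : α => ℂ) 2 := ⟨g, hg⟩
  have hinner : ∑' i, f i * conj (g i) = inner ℂ G F := by
    simp only [lp.inner_eq_tsum, RCLike.inner_apply]
    rfl
  rw [hinner, mul_comm, ← lp.norm_sq_eq_tsum F, ← lp.norm_sq_eq_tsum G, ← mul_pow]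
  gcongr
  exact norm_inner_le_norm G F

theorem InHs.summable_succ_mul_norm_sq {u : ℕ → ℂ} (hu : InHs (1 / 2) u) :
    Summable fun k : ℕ => ((k : ℝ) + 1) * ‖u k‖ ^ 2 := by
  refine (hu.mul_left (Real.sqrt 2)).of_nonneg_of_le (fun k => by positivity) fun k => ?_
  have hweight : (k : ℝ) + 1 ≤ Real.sqrt 2 * ((1 : ℝ) + (k : ℝ) ^ 2) ^ ((1 : ℝ) / 2) := by
    rw [← Real.sqrt_eq_rpow, ← Real.sqrt_mul zero_le_two,
      Real.le_sqrt (by positivity) (by positivity)]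
    nlinarith [sq_nonneg ((k : ℝ) - 1)]
  rw [← mul_assoc]
  gcongr

section Weighted

variable {E : Type*} [NormedAddCommGroup E] {u : ℕ → E}

theorem memℓp_two_comp_add_of_summable_succ_mul
    (hu : Summable fun k : ℕ => ((k : ℝ) + 1) * ‖u k‖ ^ 2) (p : ℕ) :
    Memℓp (fun q => u (p + q)) 2 := by
  have hu2 : Summable fun k => ‖u k‖ ^ 2 :=
    hu.of_nonneg_of_le (fun _ => sq_nonneg _) fun k =>
      le_mul_of_one_le_left (sq_nonneg _) (by linarith [k.cast_nonneg (α := ℝ)])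
  exact memℓp_two_iff_summable_norm_sq.mpr (hu2.comp_injective (add_right_injective p))

/-- `∑ₚ ∑_q ‖u (p + q)‖²` is the squared Hilbert–Schmidt norm of `H_u`; regrouped along
antidiagonals it is `∑ₖ (k + 1) ‖u k‖²`. -/
theorem summable_tsum_norm_sq_add (hu : Summable fun k : ℕ => ((k : ℝ) + 1) * ‖u k‖ ^ 2) :
    Summable fun p => ∑' q, ‖u (p + q)‖ ^ 2 := by
  have hprod : Summable fun pq : ℕ × ℕ => ‖u (pq.1 + pq.2)‖ ^ 2 := by
    rw [← Finset.HasAntidiagonal.sigmaAntidiagonalEquivProd.summable_iff]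
    refine (summable_sigma_of_nonneg fun _ => sq_nonneg _).mpr
      ⟨fun _ => Summable.of_finite, hu.congr fun k => ?_⟩
    simp only [Finset.HasAntidiagonal.sigmaAntidiagonalEquivProd_apply, tsum_fintype,
      Finset.univ_eq_attach]
    rw [Finset.sum_congr rfl fun y _ => by rw [Finset.HasAntidiagonal.mem_antidiagonal.mp y.2],
      Finset.sum_const, Finset.card_attach, Finset.Nat.card_antidiagonal, nsmul_eq_mul]
    push_cast
    rfl
  exact ((summable_prod_of_nonneg fun _ => sq_nonneg _).mp hprod).2

end Weighted

theorem memℓp_hankel {u h : ℕ → ℂ} (hu : Summable fun k : ℕ => ((k : ℝ) + 1) * ‖u k‖ ^ 2)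
    (hh : Memℓp h 2) : Memℓp (hankel u h) 2 := by
  refine memℓp_two_iff_summable_norm_sq.mpr <|
    ((summable_tsum_norm_sq_add hu).mul_left (∑' q, ‖h q‖ ^ 2)).of_nonneg_of_le
      (fun _ => sq_nonneg _) fun p => ?_
  rw [mul_comm]
  exact (memℓp_two_comp_add_of_summable_succ_mul hu p).norm_tsum_mul_conj_sq_le hh

theorem conj_hankel_zero (u h : ℕ → ℂ) : conj (hankel u h 0) = ∑' p, h p * conj (u p) := by
  simp only [hankel, zero_add, Complex.conj_tsum, map_mul, Complex.conj_conj, mul_comm]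

theorem shiftedHankel_shiftedHankel (u h : ℕ → ℂ) (n : ℕ) :
    shiftedHankel u (shiftedHankel u h) n
      = ∑' p, u (n + (p + 1)) * conj (hankel u h (p + 1)) := by
  simp only [shiftedHankel, hankel, add_assoc, add_comm 1]

/-- **Identity (1.3)**: `K_u² = H_u² - (·|u)u`. -/
theorem statement5 (u : ℕ → ℂ) (hu : InHs (1 / 2) u) (h : ℕ → ℂ) (hh : Memℓp h 2) (n : ℕ) :
    shiftedHankel u (shiftedHankel u h) n
      = hankel u (hankel u h) n - (∑' p : ℕ, h p * conj (u p)) * u n := by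
  have hweighted := hu.summable_succ_mul_norm_sq
  have hsum : Summable fun p => u (n + p) * conj (hankel u h p) :=
    (memℓp_two_comp_add_of_summable_succ_mul hweighted n)
      |>.summable_mul_conj (memℓp_hankel hweighted hh)
  rw [shiftedHankel_shiftedHankel, hankel, hsum.tsum_eq_zero_add, conj_hankel_zero, add_zero]
  ring

end
end
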